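/- Let M ⪰ μI and N ⪰ μI be positive definite block matrices partitioned as M = [[M₁₁, M₁₂],[M₁₂ᵀ, M₂₂]] and similarly for N (with state block of size n and lower-right block of size d). Define T(M) = −M₂₂^{-1} M₁₂ᵀ. Then ‖T(M) − T(N)‖ ≤ (1 + ‖T(N)‖)‖M − N‖ / μ. -/

import Mathlib

open Matrix MeasureTheory ProbabilityTheory
open scoped Classical RealInnerProductSpace

/-- Operator (spectral) norm of a real matrix. -/
noncomputable def opNorm {m n : Type*} [Fintype m] [Fintype n] [DecidableEq n]
    (A : Matrix m n ℝ) : ℝ :=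
  ‖LinearMap.toContinuousLinearMap (Matrix.toEuclideanLin A)‖

/-- Frobenius norm of a real matrix. -/
noncomputable def frob {m n : Type*} [Fintype m] [Fintype n] (A : Matrix m n ℝ) : ℝ :=
  Real.sqrt (∑ i, ∑ j, (A i j) ^ 2)

/-- Positive semidefinite square root (junk value `0` off the PSD matrices). -/
noncomputable def sqrtPD {n : Type*} [Fintype n] [DecidableEq n]
    (A : Matrix n n ℝ) : Matrix n n ℝ :=
  if h : A.PosSemidef then
    (h.1.eigenvectorUnitary : Matrix n n ℝ) *
      Matrix.diagonal ((↑) ∘ (Real.sqrt ·) ∘ h.1.eigenvalues) *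
      (star (h.1.eigenvectorUnitary : Matrix n n ℝ))
  else 0

/-- Matrix logarithm of a hermitian matrix via the spectral theorem
(junk value `0` off the hermitian matrices). -/
noncomputable def mlog {n : Type*} [Fintype n] [DecidableEq n]
    (A : Matrix n n ℝ) : Matrix n n ℝ :=
  if h : A.IsHermitian then
    (h.eigenvectorUnitary : Matrix n n ℝ) * Matrix.diagonal (Real.log ∘ h.eigenvalues) *
      (star (h.eigenvectorUnitary : Matrix n n ℝ))
  else 0

/-- Thompson (invariant) metric `δ∞(A,B) = ‖log (A^{-1/2} B A^{-1/2})‖`. -/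
noncomputable def thompson {n : Type*} [Fintype n] [DecidableEq n]
    (A B : Matrix n n ℝ) : ℝ :=
  opNorm (mlog ((sqrtPD A)⁻¹ * B * (sqrtPD A)⁻¹))

/-- Largest (real) eigenvalue. -/
noncomputable def lamMax {n : Type*} [Fintype n] [DecidableEq n] (A : Matrix n n ℝ) : ℝ :=
  sSup (spectrum ℝ A)

/-- Smallest (real) eigenvalue. -/
noncomputable def lamMin {n : Type*} [Fintype n] [DecidableEq n] (A : Matrix n n ℝ) : ℝ :=
  sInf (spectrum ℝ A)

/-- Solution `P = Σ_{k≥0} (Lᵀ)^k M L^k` of the discrete Lyapunov equation `P = Lᵀ P L + M`. -/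
noncomputable def dlyap {n : Type*} [Fintype n] [DecidableEq n]
    (L M : Matrix n n ℝ) : Matrix n n ℝ :=
  ∑' k : ℕ, (L ^ k)ᵀ * M * (L ^ k)

/-- `K` stabilizes `(A,B)`: the closed loop matrix `A + BK` has spectral radius `< 1`. -/
def Stabilizes {n d : Type*} [Fintype n] [DecidableEq n] [Fintype d]
    (A : Matrix n n ℝ) (B : Matrix n d ℝ) (K : Matrix d n ℝ) : Prop :=
  ∀ z ∈ spectrum ℂ ((A + B * K).map ((↑) : ℝ → ℂ)), ‖z‖ < 1

/-!
Write `A, B` for the lower-right blocks and `P, Q` for the transposed upper-right blocks of `M, N`.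
Then `A⁻¹P - B⁻¹Q = A⁻¹((P - Q) - (A - B)B⁻¹Q)`. Both `P - Q` and `A - B` are blocks of `M - N`,
so their norms are at most `‖M - N‖`, and `A ⪰ μI` gives `‖A⁻¹‖ ≤ 1/μ`.
-/

open scoped Matrix.Norms.L2Operator

theorem opNorm_eq_l2_opNorm {m n : Type*} [Fintype m] [Fintype n] [DecidableEq n]
    (A : Matrix m n ℝ) : opNorm A = ‖A‖ :=
  rfl

namespace Matrix

section L2OpNorm

variable {𝕜 : Type*} [RCLike 𝕜] {l m n o : Type*} [Fintype l] [Fintype m] [Fintype n] [Fintype o]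
  [DecidableEq l] [DecidableEq m] [DecidableEq n] [DecidableEq o]

theorem l2_opNorm_one_le : ‖(1 : Matrix n n 𝕜)‖ ≤ 1 := by
  rw [← l2_opNorm_toEuclideanCLM, map_one]
  exact ContinuousLinearMap.norm_id_le

-- `P Pᴴ = 1`, so the C⋆-identity gives `‖P‖² ≤ 1`.
theorem l2_opNorm_one_submatrix_le {e : m → n} (he : Function.Injective e) :
    ‖(1 : Matrix n n 𝕜).submatrix e id‖ ≤ 1 := by
  set P := (1 : Matrix n n 𝕜).submatrix e id
  have hP : Pᴴᴴ * Pᴴ = 1 := by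
    rw [conjTranspose_conjTranspose, conjTranspose_submatrix, conjTranspose_one,
      ← submatrix_mul _ _ _ id _ Function.bijective_id, Matrix.mul_one, submatrix_one e he]
  have hsq : ‖P‖ * ‖P‖ ≤ 1 := by
    rw [← l2_opNorm_conjTranspose P, ← l2_opNorm_conjTranspose_mul_self, hP]
    exact l2_opNorm_one_le
  nlinarith [norm_nonneg P]

theorem l2_opNorm_submatrix_le (A : Matrix m n 𝕜) {e : l → m} {f : o → n}
    (he : Function.Injective e) (hf : Function.Injective f) : ‖A.submatrix e f‖ ≤ ‖A‖ := by
  have hright : ‖(1 : Matrix n n 𝕜).submatrix id f‖ ≤ 1 := by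
    rw [← conjTranspose_one, ← conjTranspose_submatrix, l2_opNorm_conjTranspose]
    exact l2_opNorm_one_submatrix_le hf
  have hfactor : A.submatrix e f =
      (1 : Matrix m m 𝕜).submatrix e id * A * (1 : Matrix n n 𝕜).submatrix id f := by
    ext i j
    simp [mul_apply, one_apply]
  rw [hfactor]
  calc _ ≤ ‖(1 : Matrix m m 𝕜).submatrix e id‖ * ‖A‖ * ‖(1 : Matrix n n 𝕜).submatrix id f‖ :=
        (l2_opNorm_mul _ _).trans (by gcongr; exact l2_opNorm_mul _ _)
    _ ≤ 1 * ‖A‖ * 1 := by gcongr; exact l2_opNorm_one_submatrix_le he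
    _ = ‖A‖ := by ring

end L2OpNorm

open scoped RealInnerProductSpace in
theorem mul_norm_le_norm_of_mul_norm_sq_le_inner {E : Type*} [NormedAddCommGroup E]
    [InnerProductSpace ℝ E] {μ : ℝ} {x y : E} (h : μ * ‖x‖ ^ 2 ≤ ⟪x, y⟫) : μ * ‖x‖ ≤ ‖y‖ := by
  rcases (norm_nonneg x).eq_or_lt with hx | hx
  · rw [← hx, mul_zero]
    exact norm_nonneg y
  · have : μ * ‖x‖ * ‖x‖ ≤ ‖y‖ * ‖x‖ := by nlinarith [real_inner_le_norm x y]
    exact le_of_mul_le_mul_right this hx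

theorem PosSemidef.posDef_of_sub_smul_one {n : Type*} [DecidableEq n] {A : Matrix n n ℝ} {μ : ℝ}
    (h : (A - μ • 1).PosSemidef) (hμ : 0 < μ) : A.PosDef := by
  simpa using PosDef.posSemidef_add h (PosDef.one.smul hμ)

section InvNormBound

variable {n : Type*} [Fintype n] [DecidableEq n] {A : Matrix n n ℝ} {μ : ℝ}

open scoped RealInnerProductSpace in
theorem PosSemidef.mul_norm_sq_le_inner_toEuclideanCLM (h : (A - μ • 1).PosSemidef)
    (x : EuclideanSpace ℝ n) : μ * ‖x‖ ^ 2 ≤ ⟪x, toEuclideanCLM (𝕜 := ℝ) A x⟫ := by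
  rw [inner_toEuclideanCLM, ← real_inner_self_eq_norm_sq, EuclideanSpace.inner_eq_star_dotProduct,
    star_trivial]
  simpa [sub_mulVec, smul_mulVec] using h.dotProduct_mulVec_nonneg x.ofLp

theorem PosSemidef.l2_opNorm_inv_le (h : (A - μ • 1).PosSemidef) (hμ : 0 < μ) :
    ‖A⁻¹‖ ≤ μ⁻¹ := by
  have hA : A * A⁻¹ = 1 :=
    mul_nonsing_inv A ((isUnit_iff_isUnit_det A).mp (h.posDef_of_sub_smul_one hμ).isUnit)
  rw [← l2_opNorm_toEuclideanCLM]
  refine ContinuousLinearMap.opNorm_le_bound _ (by positivity) fun x => ?_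
  have hx : toEuclideanCLM (𝕜 := ℝ) A (toEuclideanCLM (𝕜 := ℝ) A⁻¹ x) = x := by
    ext1
    simp [mulVec_mulVec, hA]
  have hbound := mul_norm_le_norm_of_mul_norm_sq_le_inner
    (h.mul_norm_sq_le_inner_toEuclideanCLM (toEuclideanCLM (𝕜 := ℝ) A⁻¹ x))
  rw [hx] at hbound
  rw [inv_mul_eq_div, le_div_iff₀ hμ]
  linarith

end InvNormBound

theorem PosSemidef.toBlocks₂₂_sub_smul_one {R m n : Type*} [CommRing R] [PartialOrder R]
    [StarRing R] [DecidableEq m] [DecidableEq n] {M : Matrix (m ⊕ n) (m ⊕ n) R} {μ : R}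
    (h : (M - μ • 1).PosSemidef) : (M.toBlocks₂₂ - μ • 1).PosSemidef := by
  rw [← submatrix_one (α := R) _ (Sum.inr_injective (α := m) (β := n))]
  exact h.submatrix Sum.inr

theorem inv_mul_sub_inv_mul_eq {R m n : Type*} [CommRing R] [Fintype n] [DecidableEq n]
    {A B : Matrix n n R} (P Q : Matrix n m R) (hA : IsUnit A.det) (hB : IsUnit B.det) :
    A⁻¹ * P - B⁻¹ * Q = A⁻¹ * (P - Q - (A - B) * (B⁻¹ * Q)) := by
  simp only [Matrix.mul_sub, Matrix.sub_mul, ← Matrix.mul_assoc, nonsing_inv_mul _ hA,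
    mul_nonsing_inv _ hB, Matrix.one_mul]
  abel

end Matrix

theorem control_map_perturbation_general {n d : ℕ} (μ : ℝ) (hμ : 0 < μ)
    (M N : Matrix (Fin n ⊕ Fin d) (Fin n ⊕ Fin d) ℝ)
    (hN : N.PosDef)
    (hMμ : (M - μ • (1 : Matrix (Fin n ⊕ Fin d) (Fin n ⊕ Fin d) ℝ)).PosSemidef) :
    opNorm (-(M.toBlocks₂₂)⁻¹ * (M.toBlocks₁₂)ᵀ - -(N.toBlocks₂₂)⁻¹ * (N.toBlocks₁₂)ᵀ) ≤
      (1 + opNorm (-(N.toBlocks₂₂)⁻¹ * (N.toBlocks₁₂)ᵀ)) * opNorm (M - N) / μ := by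
  have hM₂₂ := hMμ.toBlocks₂₂_sub_smul_one
  have hMdet : IsUnit M.toBlocks₂₂.det :=
    (isUnit_iff_isUnit_det _).mp (hM₂₂.posDef_of_sub_smul_one hμ).isUnit
  have hNdet : IsUnit N.toBlocks₂₂.det :=
    (isUnit_iff_isUnit_det _).mp (hN.submatrix Sum.inr_injective).isUnit
  have h₁₂ : ‖(M.toBlocks₁₂)ᵀ - (N.toBlocks₁₂)ᵀ‖ ≤ ‖M - N‖ := by
    rw [← transpose_sub, ← conjTranspose_eq_transpose_of_trivial, l2_opNorm_conjTranspose]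
    exact l2_opNorm_submatrix_le (M - N) Sum.inl_injective Sum.inr_injective
  have h₂₂ : ‖M.toBlocks₂₂ - N.toBlocks₂₂‖ ≤ ‖M - N‖ :=
    l2_opNorm_submatrix_le (M - N) Sum.inr_injective Sum.inr_injective
  simp only [opNorm_eq_l2_opNorm, Matrix.neg_mul, neg_sub_neg, norm_neg]
  rw [norm_sub_rev, inv_mul_sub_inv_mul_eq _ _ hMdet hNdet]
  set TN := (N.toBlocks₂₂)⁻¹ * (N.toBlocks₁₂)ᵀ
  calc _ ≤ ‖(M.toBlocks₂₂)⁻¹‖ * (‖(M.toBlocks₁₂)ᵀ - (N.toBlocks₁₂)ᵀ‖ +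
          ‖M.toBlocks₂₂ - N.toBlocks₂₂‖ * ‖TN‖) := by
        refine (l2_opNorm_mul _ _).trans ?_
        gcongr
        refine (norm_sub_le _ _).trans ?_
        gcongr
        exact l2_opNorm_mul _ _
    _ ≤ μ⁻¹ * (‖M - N‖ + ‖M - N‖ * ‖TN‖) := by
        gcongr
        exact hM₂₂.l2_opNorm_inv_le hμ
    _ = (1 + ‖TN‖) * ‖M - N‖ / μ := by ring

/-- Perturbation bound for the map `M ↦ -M₂₂⁻¹ M₁₂ᵀ` on block positive definite matrices. -/
theorem control_map_perturbation {n d : ℕ} (μ : ℝ) (hμ : 0 < μ)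
    (M N : Matrix (Fin n ⊕ Fin d) (Fin n ⊕ Fin d) ℝ)
    (hM : M.PosDef) (hN : N.PosDef)
    (hMμ : (M - μ • (1 : Matrix (Fin n ⊕ Fin d) (Fin n ⊕ Fin d) ℝ)).PosSemidef)
    (hNμ : (N - μ • (1 : Matrix (Fin n ⊕ Fin d) (Fin n ⊕ Fin d) ℝ)).PosSemidef) :
    opNorm (-(M.toBlocks₂₂)⁻¹ * (M.toBlocks₁₂)ᵀ - -(N.toBlocks₂₂)⁻¹ * (N.toBlocks₁₂)ᵀ) ≤
      (1 + opNorm (-(N.toBlocks₂₂)⁻¹ * (N.toBlocks₁₂)ᵀ)) * opNorm (M - N) / μ :=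
  control_map_perturbation_general μ hμ M N hN hMμ
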